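/- Let T : ℝ₊^N → ℝ₊₊^N be a positive concave mapping whose lower bounding matrix M satisfies ρ(M) < 1, and let T_A(x) := (I − M)⁻¹·(T(x) − M·x) be its accelerated mapping. Let u ∈ ℝ₊^N and define the sequence x″_{n+1} := T_A(x″_n) with x″_1 = u. If T(u) ≥ u componentwise (so that the sequence x′_{n+1} := T(x′_n), x′_1 = u, is monotonically increasing in each component), then the sequence (x″_n) is monotonically increasing in each component; analogously, if T(u) ≤ u componentwise, then (x″_n) is monotonically decreasing in each component. -/

import Mathlib

/-!
Supergradients of a positive concave function on the orthant are nonnegative, so `M ≥ 0`, and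
with `ρ(M) < 1` the Neumann series shows `(I - M)⁻¹ ≥ 0`. By the definition of `M`,
`f i y - f i x ≥ (M (y - x)) i` for `0 ≤ x ≤ y`: bound `f i x` by a supergradient at a strictly
positive point `z ≥ y`, then let `z → y` using upper semicontinuity. So `x ↦ T x - M x` is
monotone on the orthant, hence so is `T_A`, which also maps the orthant into itself. Finally
`T_A u - u = (I - M)⁻¹ (T u - u)` has the sign of `T u - u`, and monotone iteration does the rest.
-/

open Matrix Filter Topology

noncomputable section

/-- `g` is a supergradient of `f` at `x`: the supergradient inequality holds for all
points `y` in the nonnegative orthant. -/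
def IsSupergrad {N : ℕ} (f : (Fin N → ℝ) → ℝ) (x g : Fin N → ℝ) : Prop :=
  ∀ y : Fin N → ℝ, 0 ≤ y → f y ≤ f x + ∑ i, g i * (y i - x i)

/-- `M` is the lower bounding matrix of the positive concave mapping with components `f i`:
`M i k` is the infimum of the `k`-th components of all supergradients of `f i` at points of
the nonnegative orthant. -/
def IsLBM {N : ℕ} (f : Fin N → (Fin N → ℝ) → ℝ) (M : Matrix (Fin N) (Fin N) ℝ) : Prop :=
  ∀ i k, M i k =
    sInf {t : ℝ | ∃ x : Fin N → ℝ, 0 ≤ x ∧ ∃ g : Fin N → ℝ, IsSupergrad (f i) x g ∧ g k = t}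

/-- The spectral radius of a real matrix: the supremum of the moduli of its complex
eigenvalues. -/
def specRad {N : ℕ} (M : Matrix (Fin N) (Fin N) ℝ) : ENNReal :=
  spectralRadius ℂ (M.map (algebraMap ℝ ℂ))

open scoped ENNReal

theorem tendsto_pow_atTop_nhds_zero_of_spectralRadius_lt_one {A : Type*} [NormedRing A]
    [NormedAlgebra ℂ A] [CompleteSpace A] {a : A} (ha : spectralRadius ℂ a < 1) :
    Tendsto (a ^ ·) atTop (𝓝 0) := by
  obtain ⟨r, hρr, hr1⟩ := ENNReal.lt_iff_exists_nnreal_btwn.mp ha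
  have hgelfand := spectrum.pow_nnnorm_pow_one_div_tendsto_nhds_spectralRadius a
  have hbound : ∀ᶠ n : ℕ in atTop, ‖a ^ n‖ ≤ (r : ℝ) ^ n := by
    filter_upwards [hgelfand.eventually_lt_const hρr, eventually_gt_atTop 0] with n hn hn0
    have : (‖a ^ n‖₊ : ℝ≥0∞) ≤ (r : ℝ≥0∞) ^ (n : ℝ) := by
      rw [one_div] at hn
      exact (ENNReal.rpow_inv_le_iff (by exact_mod_cast hn0)).mp hn.le
    rw [ENNReal.rpow_natCast] at this
    exact_mod_cast this
  exact squeeze_zero_norm' hbound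
    (tendsto_pow_atTop_nhds_zero_of_lt_one r.2 (by exact_mod_cast hr1))

namespace Matrix

theorem tendsto_pow_atTop_nhds_zero_of_specRad_lt_one {N : ℕ} {M : Matrix (Fin N) (Fin N) ℝ}
    (hM : specRad M < 1) : Tendsto (M ^ ·) atTop (𝓝 0) := by
  let := Matrix.linftyOpNormedRing (n := Fin N) (α := ℂ)
  let := Matrix.linftyOpNormedAlgebra (R := ℂ) (n := Fin N) (α := ℂ)
  have := ((continuous_id.matrix_map Complex.continuous_re).tendsto 0).comp
    (tendsto_pow_atTop_nhds_zero_of_spectralRadius_lt_one hM)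
  convert this using 2 with n
  · rw [Function.comp_apply, id, ← Matrix.map_pow]
    ext i j
    simp
  · simp

theorem inv_one_sub_mulVec_sub_mulVec {n R : Type*} [Fintype n] [DecidableEq n]
    [CommRing R] {M : Matrix n n R} (hM : IsUnit (1 - M).det) (v x : n → R) :
    (1 - M)⁻¹ *ᵥ (v - M *ᵥ x) = x + (1 - M)⁻¹ *ᵥ (v - x) := by
  have : v - M *ᵥ x = (1 - M) *ᵥ x + (v - x) := by
    rw [sub_mulVec, one_mulVec]
    abel
  rw [this, mulVec_add, mulVec_mulVec, nonsing_inv_mul _ hM, one_mulVec]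

variable {n : Type*} [Fintype n] {M : Matrix n n ℝ}

theorem mulVec_monotone_of_nonneg (hM : ∀ i j, 0 ≤ M i j) : Monotone (M *ᵥ ·) :=
  fun _ _ huv i => dotProduct_le_dotProduct_of_nonneg_left huv (hM i)

variable [DecidableEq n]

theorem isUnit_det_one_sub_of_tendsto_pow (hM : Tendsto (M ^ ·) atTop (𝓝 0)) :
    IsUnit (1 - M).det := by
  refine isUnit_iff_ne_zero.mpr fun hdet => ?_
  obtain ⟨v, hv, hfix⟩ := exists_mulVec_eq_zero_iff.mpr hdet
  have hpow : ∀ k : ℕ, (M ^ k) *ᵥ v = v := by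
    have hMv : M *ᵥ v = v := by
      rw [sub_mulVec, one_mulVec, sub_eq_zero] at hfix
      exact hfix.symm
    intro k
    induction k with
    | zero => simp
    | succ k ih => rw [pow_succ, ← mulVec_mulVec, hMv, ih]
  have hlim : Tendsto (fun k : ℕ => (M ^ k) *ᵥ v) atTop (𝓝 (0 *ᵥ v)) :=
    ((continuous_id.matrix_mulVec continuous_const).tendsto 0).comp hM
  simp only [hpow, zero_mulVec] at hlim
  exact hv (tendsto_const_nhds_iff.mp hlim)

theorem inv_one_sub_apply_nonneg (hM₀ : ∀ i j, 0 ≤ M i j)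
    (hM : Tendsto (M ^ ·) atTop (𝓝 0)) (i j : n) : 0 ≤ (1 - M)⁻¹ i j := by
  have hpartial : ∀ k, ∑ l ∈ Finset.range k, M ^ l = (1 - M ^ k) * (1 - M)⁻¹ := fun k => by
    rw [← geom_sum_mul_neg, Matrix.mul_assoc,
      mul_nonsing_inv _ (isUnit_det_one_sub_of_tendsto_pow hM), Matrix.mul_one]
  have hsum : Tendsto (fun k => ∑ l ∈ Finset.range k, M ^ l) atTop (𝓝 (1 - M)⁻¹) := by
    simpa [hpartial] using
      (tendsto_const_nhds (x := (1 : Matrix n n ℝ)).sub hM).mul_const (1 - M)⁻¹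
  have hentry := ((continuous_apply j).comp (continuous_apply i)).tendsto _ |>.comp hsum
  refine ge_of_tendsto hentry (Eventually.of_forall fun k => ?_)
  show 0 ≤ (∑ l ∈ Finset.range k, M ^ l) i j
  simpa [sum_apply] using Finset.sum_nonneg fun l _ => pow_apply_nonneg hM₀ l i j

end Matrix

theorem ConcaveOn.le_add_of_le_add_on_interior {E : Type*} [AddCommGroup E] [Module ℝ E]
    [TopologicalSpace E] [IsTopologicalAddGroup E] [ContinuousConstSMul ℝ E] {s : Set E}
    {f : E → ℝ} {z : E} (hf : ConcaveOn ℝ s f) (hz : z ∈ interior s)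
    {g : E →ₗ[ℝ] ℝ} (hg : ∀ y ∈ interior s, f y ≤ f z + g (y - z)) {y : E} (hy : y ∈ s) :
    f y ≤ f z + g (y - z) := by
  have hmid : (1 / 2 : ℝ) • z + (1 / 2 : ℝ) • y ∈ interior s :=
    hf.1.combo_interior_self_mem_interior hz hy (by norm_num) (by norm_num) (by norm_num)
  have hconc := hf.2 (interior_subset hz) hy (by norm_num : (0 : ℝ) ≤ 1 / 2)
    (by norm_num : (0 : ℝ) ≤ 1 / 2) (by norm_num)
  have hsup := hg _ hmid
  rw [show (1 / 2 : ℝ) • z + (1 / 2 : ℝ) • y - z = (1 / 2 : ℝ) • (y - z) by module,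
    map_smul, smul_eq_mul] at hsup
  simp only [smul_eq_mul] at hconc
  linarith

section Supergradient

variable {E : Type*} [NormedAddCommGroup E] [NormedSpace ℝ E] [FiniteDimensional ℝ E]
  {s : Set E} {f : E → ℝ} {z : E}

theorem ConcaveOn.exists_le_add_on_interior (hf : ConcaveOn ℝ s f) (hz : z ∈ interior s) :
    ∃ g : StrongDual ℝ E, ∀ y ∈ interior s, f y ≤ f z + g (y - z) := by
  set U : Set (E × ℝ) := {p | p.1 ∈ interior s ∧ p.2 < f p.1}
  have hUconv : Convex ℝ U := (hf.subset interior_subset hf.1.interior).convex_strict_hypograph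
  have hUopen : IsOpen U := by
    have hcont : ContinuousOn (fun p : E × ℝ => f p.1 - p.2) (interior s ×ˢ Set.univ) :=
      ((hf.continuousOn_interior.comp continuousOn_fst fun p hp => hp.1).sub continuousOn_snd)
    convert hcont.isOpen_inter_preimage (isOpen_interior.prod isOpen_univ) (isOpen_Ioi (a := 0))
      using 1
    ext p
    simp [U]
  obtain ⟨ℓ, hℓ⟩ := geometric_hahn_banach_open_point hUconv hUopen (fun h => lt_irrefl _ h.2)
    (x := (z, f z))
  set a := ℓ (0, 1)
  set φ := ℓ.comp (ContinuousLinearMap.inl ℝ E ℝ)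
  have hℓ_apply : ∀ x t, ℓ (x, t) = φ x + t * a := fun x t => by
    rw [show ((x, t) : E × ℝ) = (x, 0) + t • (0, 1) by simp, map_add, map_smul, smul_eq_mul]
    rfl
  -- The separating functional is not vertical, since `U` contains points below `(z, f z)`.
  have ha : 0 < a := by
    have := hℓ (z, f z - 1) ⟨hz, by linarith⟩
    rw [hℓ_apply, hℓ_apply] at this
    linarith
  refine ⟨-a⁻¹ • φ, fun y hy => ?_⟩
  have hsep : φ y + f y * a ≤ φ z + f z * a := by
    refine le_of_forall_pos_lt_add fun ε hε => ?_
    have := hℓ (y, f y - ε / a) ⟨hy, by linarith [div_pos hε ha]⟩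
    rw [hℓ_apply, hℓ_apply, sub_mul, div_mul_cancel₀ _ ha.ne'] at this
    linarith
  rw [_root_.smul_apply, smul_eq_mul, map_sub, neg_mul, ← div_eq_inv_mul, ← neg_div, neg_sub,
    ← sub_le_iff_le_add', le_div_iff₀ ha]
  linarith

theorem ConcaveOn.exists_le_add_of_mem_interior (hf : ConcaveOn ℝ s f) (hz : z ∈ interior s) :
    ∃ g : StrongDual ℝ E, ∀ y ∈ s, f y ≤ f z + g (y - z) :=
  let ⟨g, hg⟩ := hf.exists_le_add_on_interior hz
  ⟨g, fun _ hy => hf.le_add_of_le_add_on_interior hz (g := g.toLinearMap) hg hy⟩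

end Supergradient

section Orthant

variable {N : ℕ} {f₀ : (Fin N → ℝ) → ℝ}

theorem exists_isSupergrad_of_pos (hf₀ : ConcaveOn ℝ {x | 0 ≤ x} f₀) {z : Fin N → ℝ}
    (hz : ∀ i, 0 < z i) : ∃ g, IsSupergrad f₀ z g := by
  have hz_int : z ∈ interior {x : Fin N → ℝ | 0 ≤ x} :=
    interior_maximal (fun x hx i => (hx i trivial).le)
      (isOpen_set_pi Set.finite_univ fun _ _ => isOpen_Ioi) (fun i _ => hz i)
  obtain ⟨g, hg⟩ := hf₀.exists_le_add_of_mem_interior hz_int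
  refine ⟨fun i => g fun j => if i = j then 1 else 0, fun y hy => ?_⟩
  have hsum := g.toLinearMap.pi_apply_eq_sum_univ (y - z)
  simp only [ContinuousLinearMap.coe_coe, Pi.sub_apply, smul_eq_mul] at hsum
  simpa only [IsSupergrad, hsum, mul_comm] using hg y hy

theorem IsSupergrad.nonneg (hpos : ∀ x, 0 ≤ x → 0 < f₀ x) {x g : Fin N → ℝ} (hx : 0 ≤ x)
    (hg : IsSupergrad f₀ x g) (k : Fin N) : 0 ≤ g k := by
  by_contra! hgk
  set t := f₀ x / -g k
  have ht : 0 ≤ t := div_nonneg (hpos x hx).le (neg_nonneg.mpr hgk.le)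
  have hy : 0 ≤ x + Pi.single k t := add_nonneg hx (Pi.single_nonneg.mpr ht)
  have := hg _ hy
  simp only [add_sub_cancel_left, Pi.add_apply, Pi.single_apply, mul_ite, mul_zero,
    Finset.sum_ite_eq', Finset.mem_univ, if_true] at this
  have hzero : f₀ x + g k * t = 0 := by
    rw [mul_comm, div_mul_eq_mul_div, div_neg, mul_div_cancel_right₀ _ hgk.ne, add_neg_cancel]
  linarith [hpos _ hy]

theorem add_dotProduct_sub_le_of_pos (hf₀ : ConcaveOn ℝ {x | 0 ≤ x} f₀) {m : Fin N → ℝ}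
    (hm₀ : 0 ≤ m) (hm : ∀ x g, 0 ≤ x → IsSupergrad f₀ x g → m ≤ g) {x y z : Fin N → ℝ}
    (hx : 0 ≤ x) (hxy : x ≤ y) (hyz : y ≤ z) (hz : ∀ i, 0 < z i) :
    f₀ x + m ⬝ᵥ (y - x) ≤ f₀ z := by
  obtain ⟨g, hg⟩ := exists_isSupergrad_of_pos hf₀ hz
  have hsup : f₀ x ≤ f₀ z - g ⬝ᵥ (z - x) := by
    have : f₀ x ≤ f₀ z + g ⬝ᵥ (x - z) := hg x hx
    rw [← neg_sub z x, dotProduct_neg] at this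
    linarith
  have hzx : 0 ≤ z - x := sub_nonneg.mpr (hxy.trans hyz)
  calc f₀ x + m ⬝ᵥ (y - x)
      ≤ f₀ x + m ⬝ᵥ (z - x) := by
        gcongr
        exact dotProduct_le_dotProduct_of_nonneg_left (sub_le_sub_right hyz x) hm₀
    _ ≤ f₀ x + g ⬝ᵥ (z - x) := by
        gcongr
        exact dotProduct_le_dotProduct_of_nonneg_right (hm z g (fun i => (hz i).le) hg) hzx
    _ ≤ f₀ z := by linarith

theorem add_dotProduct_sub_le (hf₀ : ConcaveOn ℝ {x | 0 ≤ x} f₀)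
    (husc : UpperSemicontinuousOn f₀ {x | 0 ≤ x}) {m : Fin N → ℝ} (hm₀ : 0 ≤ m)
    (hm : ∀ x g, 0 ≤ x → IsSupergrad f₀ x g → m ≤ g) {x y : Fin N → ℝ} (hx : 0 ≤ x)
    (hxy : x ≤ y) : f₀ x + m ⬝ᵥ (y - x) ≤ f₀ y := by
  have hy : 0 ≤ y := hx.trans hxy
  have hpath : Tendsto (fun ε : ℝ => y + ε • 1) (𝓝[>] 0) (𝓝[{x | 0 ≤ x}] y) := by
    refine tendsto_nhdsWithin_iff.mpr ⟨?_, ?_⟩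
    · have hcont : Continuous fun ε : ℝ => y + ε • (1 : Fin N → ℝ) := by fun_prop
      exact (hcont.tendsto' 0 y (by simp)).mono_left nhdsWithin_le_nhds
    · filter_upwards [self_mem_nhdsWithin] with ε hε
      exact add_nonneg hy (smul_nonneg (le_of_lt hε) zero_le_one)
  refine le_of_forall_gt_imp_ge_of_dense fun c hc => ?_
  obtain ⟨ε, hεc, hε⟩ := ((hpath.eventually (husc y hy c hc)).and self_mem_nhdsWithin).exists
  refine (add_dotProduct_sub_le_of_pos hf₀ hm₀ hm hx hxy ?_ fun i => ?_).trans hεc.le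
  · exact le_add_of_nonneg_right (smul_nonneg (le_of_lt hε) zero_le_one)
  · simpa using add_pos_of_nonneg_of_pos (hy i) hε

end Orthant

namespace IsLBM

variable {N : ℕ} {f : Fin N → (Fin N → ℝ) → ℝ} {M : Matrix (Fin N) (Fin N) ℝ}

theorem le_of_isSupergrad (hM : IsLBM f M) (hpos : ∀ i x, 0 ≤ x → 0 < f i x) {i : Fin N}
    {x g : Fin N → ℝ} (hx : 0 ≤ x) (hg : IsSupergrad (f i) x g) (k : Fin N) : M i k ≤ g k := by
  rw [hM i k]
  refine csInf_le ⟨0, ?_⟩ ⟨x, hx, g, hg, rfl⟩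
  rintro _ ⟨x', hx', g', hg', rfl⟩
  exact hg'.nonneg (hpos i) hx' k

theorem nonneg (hM : IsLBM f M) (hpos : ∀ i x, 0 ≤ x → 0 < f i x) (i k : Fin N) :
    0 ≤ M i k := by
  rw [hM i k]
  refine Real.sInf_nonneg ?_
  rintro _ ⟨x, hx, g, hg, rfl⟩
  exact hg.nonneg (hpos i) hx k

theorem monotoneOn_sub_mulVec (hM : IsLBM f M) (hconc : ∀ i, ConcaveOn ℝ {x | 0 ≤ x} (f i))
    (husc : ∀ i, UpperSemicontinuousOn (f i) {x | 0 ≤ x}) (hpos : ∀ i x, 0 ≤ x → 0 < f i x) :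
    MonotoneOn (fun x => (fun i => f i x) - M *ᵥ x) {x | 0 ≤ x} := by
  intro x hx y _ hxy i
  have := add_dotProduct_sub_le (hconc i) (husc i) (fun k => hM.nonneg hpos i k)
    (fun _ _ hx' hg k => hM.le_of_isSupergrad hpos hx' hg k) hx hxy
  simp only [Pi.sub_apply, mulVec, dotProduct_sub] at this ⊢
  linarith

end IsLBM

theorem MonotoneOn.monotone_of_recursion {α : Type*} [Preorder α] {s : Set α} {S : α → α}
    (hS : MonotoneOn S s) (hs : Set.MapsTo S s s) {x : ℕ → α} (hx : ∀ n, x (n + 1) = S (x n))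
    (h₀ : x 0 ∈ s) (h₁ : x 0 ≤ x 1) : Monotone x := by
  have : ∀ n, x n ∈ s ∧ x n ≤ x (n + 1) := by
    intro n
    induction n with
    | zero => exact ⟨h₀, h₁⟩
    | succ n ih =>
      rw [hx (n + 1), hx n]
      exact ⟨hs ih.1, hS ih.1 (hs ih.1) (hx n ▸ ih.2)⟩
  exact monotone_nat_of_le_succ fun n => (this n).2

theorem MonotoneOn.antitone_of_recursion {α : Type*} [Preorder α] {s : Set α} {S : α → α}
    (hS : MonotoneOn S s) (hs : Set.MapsTo S s s) {x : ℕ → α} (hx : ∀ n, x (n + 1) = S (x n))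
    (h₀ : x 0 ∈ s) (h₁ : x 1 ≤ x 0) : Antitone x :=
  MonotoneOn.monotone_of_recursion (α := αᵒᵈ) hS.dual hs hx h₀ h₁

/-- If the standard iterates of T from u are monotone (i.e. T(u) ≥ u, resp. T(u) ≤ u),
then the iterates of the accelerated mapping from u are monotone in the same sense. -/
theorem accelerated_iterates_monotone {N : ℕ} (f : Fin N → (Fin N → ℝ) → ℝ)
    (hconc : ∀ i, ConcaveOn ℝ {x : Fin N → ℝ | 0 ≤ x} (f i))
    (husc : ∀ i, UpperSemicontinuousOn (f i) {x : Fin N → ℝ | 0 ≤ x})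
    (hpos : ∀ i, ∀ x : Fin N → ℝ, 0 ≤ x → 0 < f i x)
    (M : Matrix (Fin N) (Fin N) ℝ) (hM : IsLBM f M)
    (hrad : specRad M < 1)
    (TA : (Fin N → ℝ) → (Fin N → ℝ))
    (hTA : ∀ x : Fin N → ℝ, TA x = (1 - M)⁻¹ *ᵥ ((fun i => f i x) - M *ᵥ x))
    (u : Fin N → ℝ) (hu : 0 ≤ u)
    (xq : ℕ → Fin N → ℝ) (hq0 : xq 0 = u) (hqrec : ∀ n, xq (n + 1) = TA (xq n)) :
    ((u ≤ fun i => f i u) → ∀ n, xq n ≤ xq (n + 1)) ∧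
    (((fun i => f i u) ≤ u) → ∀ n, xq (n + 1) ≤ xq n) := by
  have hpow := Matrix.tendsto_pow_atTop_nhds_zero_of_specRad_lt_one hrad
  have hB := Matrix.mulVec_monotone_of_nonneg
    (Matrix.inv_one_sub_apply_nonneg (hM.nonneg hpos) hpow)
  have hG := hM.monotoneOn_sub_mulVec hconc husc hpos
  have hTA_mono : MonotoneOn TA {x | 0 ≤ x} := fun x hx y hy hxy => by
    simpa only [hTA] using hB (hG hx hy hxy)
  have hTA_maps : Set.MapsTo TA {x | 0 ≤ x} {x | 0 ≤ x} := fun x hx => by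
    show 0 ≤ TA x
    have hG₀ : 0 ≤ (fun i => f i 0) - M *ᵥ 0 := fun i => by simpa using (hpos i 0 le_rfl).le
    have hG_le := hG (le_refl (0 : Fin N → ℝ)) hx hx
    simpa only [hTA, mulVec_zero] using hB (hG₀.trans hG_le)
  have hstep : ∀ x, TA x = x + (1 - M)⁻¹ *ᵥ ((fun i => f i x) - x) := fun x => by
    rw [hTA, Matrix.inv_one_sub_mulVec_sub_mulVec (Matrix.isUnit_det_one_sub_of_tendsto_pow hpow)]
  refine ⟨fun hup n => ?_, fun hdown n => ?_⟩
  · refine hTA_mono.monotone_of_recursion hTA_maps hqrec (hq0 ▸ hu) ?_ n.le_succ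
    rw [hqrec, hq0, hstep]
    exact le_add_of_nonneg_right (by simpa using hB (sub_nonneg.mpr hup))
  · refine hTA_mono.antitone_of_recursion hTA_maps hqrec (hq0 ▸ hu) ?_ n.le_succ
    rw [hqrec, hq0, hstep]
    exact add_le_of_nonpos_right (by simpa using hB (sub_nonpos.mpr hdown))
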